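/- In Γ₃, the element a5⁴ is nontrivial, lies in Λ₃, and its normal closure in Λ₃ is a nontrivial proper normal subgroup of Λ₃ (it is neither the trivial subgroup nor all of Λ₃). In particular, Λ₃ is not simple. -/

import Mathlib

/-!
Γ₃ acts on two 10-regular trees, the Cayley graphs of the free groups on the five a's and on
the five b's. On the b-tree each bᵢ acts by left multiplication, while each aᵢ rewrites a b-word
letter by letter, completing every (a-letter, b-letter) corner to the unique square of the
presentation; symmetrically for the a-tree. Since a₅ translates the a-tree, a₅⁴ ≠ 1. On the b-tree,
a₅⁴ acts through a composite transducer whose reachable states all copy their input, so a₅⁴ acts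
trivially. Hence the normal closure of a₅⁴ in Λ₃ lies in the kernel of the b-tree action, which
misses b₁² ∈ Λ₃.
-/

/- Generators: `Gen.a i` is the generator a(i+1), `Gen.b i` is b(i+1) of the paper. -/
inductive Gen : Type
  | a : Fin 5 → Gen
  | b : Fin 5 → Gen

/-- The letter aᵢ₊₁ viewed in the free group. -/
def ga (i : Fin 5) : FreeGroup Gen := FreeGroup.of (Gen.a i)

/-- The letter bᵢ₊₁ viewed in the free group. -/
def gb (i : Fin 5) : FreeGroup Gen := FreeGroup.of (Gen.b i)

/-- The 25 relators. -/
def rels : Set (FreeGroup Gen) :=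
  { ga 0 * gb 0 * (ga 1)⁻¹ * (gb 1)⁻¹,
    ga 0 * gb 1 * (ga 0)⁻¹ * (gb 0)⁻¹,
    ga 0 * gb 2 * (ga 1)⁻¹ * (gb 2)⁻¹,
    ga 0 * (gb 2)⁻¹ * (ga 1)⁻¹ * gb 1,
    ga 0 * (gb 0)⁻¹ * (ga 1)⁻¹ * gb 2,
    ga 1 * gb 1 * (ga 1)⁻¹ * (gb 0)⁻¹,
    ga 2 * gb 0 * (ga 3)⁻¹ * (gb 1)⁻¹,
    ga 2 * gb 1 * (ga 2)⁻¹ * (gb 0)⁻¹,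
    ga 2 * gb 2 * (ga 3)⁻¹ * (gb 2)⁻¹,
    ga 2 * (gb 2)⁻¹ * (ga 3)⁻¹ * gb 1,
    ga 2 * (gb 0)⁻¹ * (ga 3)⁻¹ * gb 2,
    ga 3 * gb 1 * (ga 3)⁻¹ * (gb 0)⁻¹,
    ga 0 * gb 3 * ga 0 * gb 4,
    ga 0 * (gb 4)⁻¹ * ga 1 * (gb 4)⁻¹,
    ga 0 * (gb 3)⁻¹ * (ga 3)⁻¹ * (gb 3)⁻¹,
    ga 1 * gb 3 * ga 1 * gb 4,
    ga 1 * (gb 3)⁻¹ * (ga 2)⁻¹ * (gb 3)⁻¹,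
    ga 2 * gb 4 * ga 3 * (gb 3)⁻¹,
    ga 2 * (gb 4)⁻¹ * (ga 4)⁻¹ * (gb 4)⁻¹,
    ga 2 * (gb 3)⁻¹ * ga 3 * gb 4,
    ga 3 * (gb 4)⁻¹ * ga 4 * (gb 4)⁻¹,
    ga 4 * gb 0 * ga 4 * gb 3,
    ga 4 * gb 1 * (ga 4)⁻¹ * gb 2,
    ga 4 * gb 2 * (ga 4)⁻¹ * gb 1,
    ga 4 * (gb 3)⁻¹ * ga 4 * (gb 0)⁻¹ }

/-- The presented group. -/
abbrev G : Type := PresentedGroup rels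

/-- The image of the generator aᵢ₊₁ in the presented group. -/
def γa (i : Fin 5) : G := PresentedGroup.of (Gen.a i)

/-- The image of the generator bᵢ₊₁ in the presented group. -/
def γb (i : Fin 5) : G := PresentedGroup.of (Gen.b i)

/-- Target values of the homomorphism: each aⱼ ↦ (1,0), each bⱼ ↦ (0,1). -/
def fgen : Gen → Multiplicative (ZMod 2 × ZMod 2)
  | .a _ => Multiplicative.ofAdd (1, 0)
  | .b _ => Multiplicative.ofAdd (0, 1)

lemma fgen_rels : ∀ r ∈ rels, FreeGroup.lift fgen r = 1 := by
  intro r hr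
  simp only [rels, Set.mem_insert_iff, Set.mem_singleton_iff] at hr
  rcases hr with rfl|rfl|rfl|rfl|rfl|rfl|rfl|rfl|rfl|rfl|rfl|rfl|rfl|rfl|rfl|rfl|rfl|rfl|rfl|rfl|rfl|rfl|rfl|rfl|rfl <;>
    simp only [ga, gb, map_mul, map_inv, FreeGroup.lift_apply_of] <;> decide

/-- The homomorphism φ. -/
def φ : G →* Multiplicative (ZMod 2 × ZMod 2) := PresentedGroup.toGroup fgen_rels

/-- Λ is the kernel of φ. -/
def Λ : Subgroup G := φ.ker

open FreeGroup

def invLetter {α : Type*} (x : α × Bool) : α × Bool := (x.1, !x.2)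

lemma invLetter_invLetter {α : Type*} (x : α × Bool) : invLetter (invLetter x) = x := by
  simp [invLetter]

section Transducer

variable {S S' γ : Type*}

def transduce (T : S → γ → γ × S) : S → List γ → List γ
  | _, [] => []
  | s, x :: w => (T s x).1 :: transduce T (T s x).2 w

/-- The composite transducer: first `T'`, then `T`. -/
def seqRule (T : S → γ → γ × S) (T' : S' → γ → γ × S') : S × S' → γ → γ × (S × S') :=
  fun q x => ((T q.1 (T' q.2 x).1).1, (T q.1 (T' q.2 x).1).2, (T' q.2 x).2)

lemma transduce_transduce (T : S → γ → γ × S) (T' : S' → γ → γ × S') (s : S) (s' : S') :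
    ∀ w, transduce T s (transduce T' s' w) = transduce (seqRule T T') (s, s') w
  | [] => rfl
  | _ :: w => congrArg (_ :: ·) (transduce_transduce T T' _ _ w)

lemma transduce_eq_self_of_mem (T : S → γ → γ × S) {P : Set S}
    (hP : ∀ s ∈ P, ∀ x, (T s x).1 = x ∧ (T s x).2 ∈ P) {s : S} (hs : s ∈ P) :
    ∀ w, transduce T s w = w
  | [] => rfl
  | x :: w => by
    obtain ⟨hout, hnext⟩ := hP s hs x
    exact congrArg₂ (· :: ·) hout (transduce_eq_self_of_mem T hP hnext w)

end Transducer

section SquareRule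

variable {α β : Type*}

/-- `R s x = (x', s')` records a square `s x = x' s'` of a square complex; the two conditions say
that the same square, read from the corners at `s'` and at `s⁻¹`, is recorded as well. -/
structure IsSquareRule (R : α × Bool → β × Bool → (β × Bool) × (α × Bool)) : Prop where
  inv_right : ∀ s x, R (R s x).2 (invLetter x) = (invLetter (R s x).1, s)
  inv_left : ∀ s x, R (invLetter s) (R s x).1 = (x, invLetter (R s x).2)

def letterPerm (x : β × Bool) : Equiv.Perm (FreeGroup β) :=
  MulAction.toPerm (mk [x])

lemma letterPerm_inv (x : β × Bool) : (letterPerm x)⁻¹ = letterPerm (invLetter x) :=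
  Equiv.ext fun _ => rfl

lemma letterPerm_pow_apply (i : β) (n : ℕ) (g : FreeGroup β) :
    (letterPerm (i, true) ^ n) g = of i ^ n * g := by
  rw [letterPerm, ← MulAction.toPermHom_apply, ← map_pow]
  rfl

lemma cond_letterPerm (i : β) (b : Bool) :
    cond b (letterPerm (i, true)) (letterPerm (i, true))⁻¹ = letterPerm (i, b) := by
  cases b <;> simp [letterPerm_inv, invLetter]

namespace IsSquareRule

variable {R : α × Bool → β × Bool → (β × Bool) × (α × Bool)} (hR : IsSquareRule R)
include hR

lemma transduce_step (s : α × Bool) {u v : List (β × Bool)} (h : Red.Step u v) :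
    Red.Step (transduce R s u) (transduce R s v) := by
  obtain @⟨L₁, L₂, x, b⟩ := h
  induction L₁ generalizing s with
  | nil =>
    -- reading `x x⁻¹` from `s` outputs `x' x'⁻¹` and returns to `s`
    have hsq := hR.inv_right s (x, b)
    simp only [invLetter] at hsq
    simp only [List.nil_append, transduce, hsq]
    exact Red.Step.cons_not
  | cons _ _ ih => exact (ih _).cons

lemma transduce_inv (s : α × Bool) : ∀ w, transduce R (invLetter s) (transduce R s w) = w
  | [] => rfl
  | x :: w => by
    simp only [transduce, hR.inv_left s x]
    exact congrArg (x :: ·) (transduce_inv _ w)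

def perm (s : α × Bool) : Equiv.Perm (FreeGroup β) where
  toFun := Quot.map (transduce R s) fun _ _ => hR.transduce_step s
  invFun := Quot.map (transduce R (invLetter s)) fun _ _ => hR.transduce_step _
  left_inv := by
    rintro ⟨w⟩
    exact congrArg FreeGroup.mk (hR.transduce_inv s w)
  right_inv := by
    rintro ⟨w⟩
    have h := hR.transduce_inv (invLetter s) w
    rw [invLetter_invLetter] at h
    exact congrArg FreeGroup.mk h

lemma perm_inv (s : α × Bool) : (hR.perm s)⁻¹ = hR.perm (invLetter s) :=
  Equiv.ext fun _ => rfl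

lemma cond_perm (i : α) (b : Bool) :
    cond b (hR.perm (i, true)) (hR.perm (i, true))⁻¹ = hR.perm (i, b) := by
  cases b <;> simp [hR.perm_inv, invLetter]

lemma perm_mul_letterPerm_eq_one {s t : α × Bool} {x y : β × Bool}
    (h : R s x = (invLetter y, invLetter t)) :
    hR.perm s * letterPerm x * hR.perm t * letterPerm y = 1 := by
  refine Equiv.ext fun g => Quot.inductionOn g fun w => ?_
  change FreeGroup.mk (transduce R s (x :: transduce R t (y :: w))) = FreeGroup.mk w
  rw [transduce, h, hR.transduce_inv]
  exact Quot.sound Red.Step.cons_not_rev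

lemma letterPerm_mul_perm_eq_one {s t : α × Bool} {x y : β × Bool}
    (h : R s y = (invLetter x, invLetter t)) :
    letterPerm x * hR.perm s * letterPerm y * hR.perm t = 1 := by
  have h' := mul_eq_one_comm.1 (hR.perm_mul_letterPerm_eq_one h)
  simpa only [mul_assoc] using h'

end IsSquareRule

/-- The four readings, starting at an `α`-letter, of the square `a b a' b' = 1`. -/
def corners (q : (α × Bool) × (β × Bool) × (α × Bool) × (β × Bool)) :
    List ((α × Bool) × (β × Bool) × (α × Bool) × (β × Bool)) :=
  let (a, b, a', b') := q
  [(a, b, a', b'), (a', b', a, b), (invLetter a', invLetter b, invLetter a, invLetter b'),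
    (invLetter a, invLetter b', invLetter a', invLetter b)]

def rotate (q : (α × Bool) × (β × Bool) × (α × Bool) × (β × Bool)) :
    (β × Bool) × (α × Bool) × (β × Bool) × (α × Bool) :=
  (q.2.1, q.2.2.1, q.2.2.2, q.1)

def ruleOfSquares [DecidableEq α] [DecidableEq β]
    (Q : List ((α × Bool) × (β × Bool) × (α × Bool) × (β × Bool)))
    (s : α × Bool) (x : β × Bool) : (β × Bool) × (α × Bool) :=
  match (Q.flatMap corners).find? fun c => c.1 = s ∧ c.2.1 = x with
  | some c => (invLetter c.2.2.2, invLetter c.2.2.1)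
  | none => (x, s)

end SquareRule

lemma Subgroup.normalClosure_singleton_ne_top {G M : Type*} [Group G] [Group M] (f : G →* M)
    {x y : G} (hx : f x = 1) (hy : f y ≠ 1) : Subgroup.normalClosure {x} ≠ ⊤ := by
  intro htop
  have hle : Subgroup.normalClosure {x} ≤ f.ker :=
    Subgroup.normalClosure_le_normal (Set.singleton_subset_iff.2 hx)
  exact hy (hle (htop ▸ Subgroup.mem_top y))

abbrev Letter : Type := Fin 5 × Bool

/-- `(x₁, x₂, x₃, x₄)` is the relator `x₁ x₂ x₃ x₄`, where `x₁, x₃` are a-letters, `x₂, x₄` are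
b-letters, and `(i, false)` is the inverse of `(i, true)`. -/
def relatorSquares : List (Letter × Letter × Letter × Letter) :=
 [((0, true), (0, true), (1, false), (1, false)),
  ((0, true), (1, true), (0, false), (0, false)),
  ((0, true), (2, true), (1, false), (2, false)),
  ((0, true), (2, false), (1, false), (1, true)),
  ((0, true), (0, false), (1, false), (2, true)),
  ((1, true), (1, true), (1, false), (0, false)),
  ((2, true), (0, true), (3, false), (1, false)),
  ((2, true), (1, true), (2, false), (0, false)),
  ((2, true), (2, true), (3, false), (2, false)),
  ((2, true), (2, false), (3, false), (1, true)),
  ((2, true), (0, false), (3, false), (2, true)),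
  ((3, true), (1, true), (3, false), (0, false)),
  ((0, true), (3, true), (0, true), (4, true)),
  ((0, true), (4, false), (1, true), (4, false)),
  ((0, true), (3, false), (3, false), (3, false)),
  ((1, true), (3, true), (1, true), (4, true)),
  ((1, true), (3, false), (2, false), (3, false)),
  ((2, true), (4, true), (3, true), (3, false)),
  ((2, true), (4, false), (4, false), (4, false)),
  ((2, true), (3, false), (3, true), (4, true)),
  ((3, true), (4, false), (4, true), (4, false)),
  ((4, true), (0, true), (4, true), (3, true)),
  ((4, true), (1, true), (4, false), (2, true)),
  ((4, true), (2, true), (4, false), (1, true)),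
  ((4, true), (3, false), (4, true), (0, false))]

def relatorWord (q : Letter × Letter × Letter × Letter) : FreeGroup Gen :=
  mk [(Gen.a q.1.1, q.1.2), (Gen.b q.2.1.1, q.2.1.2), (Gen.a q.2.2.1.1, q.2.2.1.2),
    (Gen.b q.2.2.2.1, q.2.2.2.2)]

lemma rels_eq : rels = {r | r ∈ relatorSquares.map relatorWord} := by
  ext r
  simp only [rels, relatorSquares, List.map_cons, List.map_nil, List.mem_cons, List.not_mem_nil,
    or_false, Set.mem_insert_iff, Set.mem_singleton_iff, Set.mem_ofPred_eq]
  exact Iff.rfl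

lemma lift_relatorWord {H : Type*} [Group H] (f : Gen → H) (q : Letter × Letter × Letter × Letter) :
    lift f (relatorWord q) =
      cond q.1.2 (f (.a q.1.1)) (f (.a q.1.1))⁻¹ *
        cond q.2.1.2 (f (.b q.2.1.1)) (f (.b q.2.1.1))⁻¹ *
        cond q.2.2.1.2 (f (.a q.2.2.1.1)) (f (.a q.2.2.1.1))⁻¹ *
        cond q.2.2.2.2 (f (.b q.2.2.2.1)) (f (.b q.2.2.2.1))⁻¹ := by
  simp [relatorWord, lift_mk, mul_assoc]

/-- States are a-letters, inputs b-letters. -/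
def ruleB : Letter → Letter → Letter × Letter := ruleOfSquares relatorSquares

/-- States are b-letters, inputs a-letters. -/
def ruleA : Letter → Letter → Letter × Letter := ruleOfSquares (relatorSquares.map rotate)

lemma isSquareRule_ruleB : IsSquareRule ruleB := ⟨by decide, by decide⟩

lemma isSquareRule_ruleA : IsSquareRule ruleA := ⟨by decide, by decide⟩

lemma ruleB_relator :
    ∀ q ∈ relatorSquares, ruleB q.1 q.2.1 = (invLetter q.2.2.2, invLetter q.2.2.1) := by
  decide

lemma ruleA_relator :
    ∀ q ∈ relatorSquares, ruleA q.2.1 q.2.2.1 = (invLetter q.1, invLetter q.2.2.2) := by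
  decide

def bTreeGen : Gen → Equiv.Perm (FreeGroup (Fin 5))
  | .a i => isSquareRule_ruleB.perm (i, true)
  | .b i => letterPerm (i, true)

def aTreeGen : Gen → Equiv.Perm (FreeGroup (Fin 5))
  | .a i => letterPerm (i, true)
  | .b i => isSquareRule_ruleA.perm (i, true)

lemma bTreeGen_rels : ∀ r ∈ rels, lift bTreeGen r = 1 := by
  intro r hr
  rw [rels_eq] at hr
  obtain ⟨q, hq, rfl⟩ := List.mem_map.1 hr
  rw [lift_relatorWord]
  simp only [bTreeGen, cond_letterPerm, isSquareRule_ruleB.cond_perm]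
  exact isSquareRule_ruleB.perm_mul_letterPerm_eq_one (ruleB_relator q hq)

lemma aTreeGen_rels : ∀ r ∈ rels, lift aTreeGen r = 1 := by
  intro r hr
  rw [rels_eq] at hr
  obtain ⟨q, hq, rfl⟩ := List.mem_map.1 hr
  rw [lift_relatorWord]
  simp only [aTreeGen, cond_letterPerm, isSquareRule_ruleA.cond_perm]
  exact isSquareRule_ruleA.letterPerm_mul_perm_eq_one (ruleA_relator q hq)

def bTreeAction : G →* Equiv.Perm (FreeGroup (Fin 5)) := PresentedGroup.toGroup bTreeGen_rels

def aTreeAction : G →* Equiv.Perm (FreeGroup (Fin 5)) := PresentedGroup.toGroup aTreeGen_rels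

/-- The states reachable from `(a₅, a₅, a₅, a₅)` in the fourfold composite of `ruleB`. -/
def a5PowFourStates : List (Letter × Letter × Letter × Letter) :=
 [((4, true), (4, true), (4, true), (4, true)),
  ((4, false), (4, false), (4, false), (4, false)),
  ((3, false), (2, true), (3, false), (2, true)),
  ((2, true), (3, false), (2, true), (3, false)),
  ((2, false), (3, true), (2, false), (3, true)),
  ((3, true), (2, false), (3, true), (2, false)),
  ((0, false), (1, true), (0, false), (1, true)),
  ((1, true), (0, false), (1, true), (0, false)),
  ((1, false), (0, true), (1, false), (0, true)),
  ((0, true), (1, false), (0, true), (1, false))]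

lemma a5PowFourStates_closed : ∀ q ∈ a5PowFourStates, ∀ x,
    (seqRule ruleB (seqRule ruleB (seqRule ruleB ruleB)) q x).1 = x ∧
      (seqRule ruleB (seqRule ruleB (seqRule ruleB ruleB)) q x).2 ∈ a5PowFourStates := by
  decide

lemma bTreeAction_a5_pow_four : bTreeAction (γa 4 ^ 4) = 1 := by
  have ha : bTreeAction (γa 4) = isSquareRule_ruleB.perm (4, true) := PresentedGroup.toGroup.of _
  refine Equiv.ext fun g => Quot.inductionOn g fun w => ?_
  rw [map_pow, ha]
  change mk (transduce ruleB _ (transduce ruleB _ (transduce ruleB _ (transduce ruleB _ w)))) =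
    mk w
  simp only [transduce_transduce]
  rw [transduce_eq_self_of_mem _ (P := {q | q ∈ a5PowFourStates}) a5PowFourStates_closed
    (by decide)]

lemma bTreeAction_b1_sq_ne_one : bTreeAction (γb 0 ^ 2) ≠ 1 := by
  have hb : bTreeAction (γb 0) = letterPerm (0, true) := PresentedGroup.toGroup.of _
  intro h
  have h1 := congrArg (fun σ => σ 1) h
  simp only [map_pow, hb, letterPerm_pow_apply, Equiv.Perm.one_apply, mul_one] at h1
  simp [of_ne_one] at h1

lemma a5_pow_four_ne_one : γa 4 ^ 4 ≠ 1 := by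
  have ha : aTreeAction (γa 4) = letterPerm (4, true) := PresentedGroup.toGroup.of _
  intro h
  have h1 := congrArg (fun g => aTreeAction g 1) h
  simp only [map_pow, ha, letterPerm_pow_apply, mul_one] at h1
  simp [of_ne_one] at h1

lemma a5_pow_four_mem_Λ : γa 4 ^ 4 ∈ Λ := by
  have ha : φ (γa 4) = fgen (.a 4) := PresentedGroup.toGroup.of _
  rw [Λ, MonoidHom.mem_ker, map_pow, ha]
  decide

lemma b1_sq_mem_Λ : γb 0 ^ 2 ∈ Λ := by
  have hb : φ (γb 0) = fgen (.b 0) := PresentedGroup.toGroup.of _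
  rw [Λ, MonoidHom.mem_ker, map_pow, hb]
  decide

/-- a₅⁴ is a nontrivial element of Λ₃ whose normal closure in Λ₃ is a
nontrivial proper normal subgroup; in particular Λ₃ is not simple. -/
theorem a5_pow_four_normal_closure :
    (γa 4) ^ 4 ≠ 1 ∧
      ∃ h : (γa 4) ^ 4 ∈ Λ,
        Subgroup.normalClosure ({⟨(γa 4) ^ 4, h⟩} : Set ↥Λ) ≠ ⊥ ∧
        Subgroup.normalClosure ({⟨(γa 4) ^ 4, h⟩} : Set ↥Λ) ≠ ⊤ ∧
        ¬ IsSimpleGroup ↥Λ := by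
  have hbot : Subgroup.normalClosure ({⟨γa 4 ^ 4, a5_pow_four_mem_Λ⟩} : Set Λ) ≠ ⊥ := by
    rw [Ne, Subgroup.normalClosure_eq_bot_iff, Set.singleton_subset_iff, Set.mem_singleton_iff,
      Subgroup.mk_eq_one]
    exact a5_pow_four_ne_one
  have htop : Subgroup.normalClosure ({⟨γa 4 ^ 4, a5_pow_four_mem_Λ⟩} : Set Λ) ≠ ⊤ :=
    Subgroup.normalClosure_singleton_ne_top (bTreeAction.comp Λ.subtype)
      (y := ⟨γb 0 ^ 2, b1_sq_mem_Λ⟩) bTreeAction_a5_pow_four bTreeAction_b1_sq_ne_one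
  refine ⟨a5_pow_four_ne_one, a5_pow_four_mem_Λ, hbot, htop, fun hsimple => ?_⟩
  exact (hsimple.eq_bot_or_eq_top_of_normal _ Subgroup.normalClosure_normal).elim hbot htop
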